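/- If M is an irreducible integer matrix (its characteristic polynomial is irreducible over ℚ) with a positive left eigenvector ω for a real eigenvalue λ, then the entries of ω are linearly independent over ℚ; in particular, for distinct standard basis vectors e_a, e_b, the numbers ⟨e_a,ω⟩ = ω_a and ⟨e_b,ω⟩ = ω_b are independent over ℚ. -/

import Mathlib

/-!
The `ℚ`-linear map `q ↦ ∑ qᵢ ωᵢ` turns `M` into multiplication by `λ`, so its kernel is an
`M`-invariant subspace of `ℚᵏ`. When `χ_M` is irreducible there are no invariant subspaces besides
`0` and `ℚᵏ`: for `q ≠ 0` and `p ≠ 0` of degree `< k`, `p` is coprime to `χ_M`, so by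
Cayley–Hamilton `p(M) q ≠ 0`; hence `p ↦ p(M) q` embeds the `k`-dimensional space of such
polynomials into the span of the orbit of `q`. As `ω ≠ 0`, the kernel is `0`.
-/

open Polynomial Matrix

namespace Matrix

variable {K : Type*} [Field K] {n : Type*} [Fintype n] {A : Matrix n n K}
  {L : Type*} [CommRing L] [Algebra K L]

theorem linearCombination_mulVec (ω : n → L) (q : n → K) :
    Fintype.linearCombination K ω (A *ᵥ q) =
      Fintype.linearCombination K (ω ᵥ* A.map (algebraMap K L)) q := by
  simp only [Fintype.linearCombination_apply, mulVec, vecMul, dotProduct, map_apply,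
    Algebra.smul_def, map_sum, map_mul, Finset.sum_mul, Finset.mul_sum]
  rw [Finset.sum_comm]
  exact Finset.sum_congr rfl fun i _ ↦ Finset.sum_congr rfl fun j _ ↦ by ring

variable [DecidableEq n]

theorem aeval_mulVec_mem {W : Submodule K (n → K)} (hW : ∀ x ∈ W, A *ᵥ x ∈ W) (p : K[X])
    {q : n → K} (hq : q ∈ W) : aeval A p *ᵥ q ∈ W := by
  induction p using Polynomial.induction_on' with
  | add p r hp hr => rw [map_add, add_mulVec]; exact W.add_mem hp hr
  | monomial m c =>
    have hpow : A ^ m *ᵥ q ∈ W := by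
      induction m with
      | zero => simpa using hq
      | succ m ih => rw [pow_succ', ← mulVec_mulVec]; exact hW _ ih
    rw [aeval_monomial, ← Algebra.smul_def, smul_mulVec]
    exact W.smul_mem c hpow

theorem aeval_mulVec_ne_zero (hA : Irreducible A.charpoly) {p : K[X]} (hp : p ≠ 0)
    (hdeg : p.natDegree < Fintype.card n) {q : n → K} (hq : q ≠ 0) : aeval A p *ᵥ q ≠ 0 := by
  intro hpq
  have hndvd : ¬ A.charpoly ∣ p := fun h ↦
    (natDegree_le_of_dvd h hp).not_gt (A.charpoly_natDegree_eq_dim ▸ hdeg)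
  obtain ⟨u, w, huw⟩ := hA.coprime_iff_not_dvd.mpr hndvd
  apply hq
  calc q = aeval A (u * A.charpoly + w * p) *ᵥ q := by rw [huw, map_one, one_mulVec]
    _ = 0 := by
      rw [map_add, map_mul, map_mul, aeval_self_charpoly, add_mulVec, ← mulVec_mulVec,
        ← mulVec_mulVec, hpq]
      simp

theorem eq_bot_or_eq_top_of_mulVec_mem (hA : Irreducible A.charpoly) (W : Submodule K (n → K))
    (hW : ∀ x ∈ W, A *ᵥ x ∈ W) : W = ⊥ ∨ W = ⊤ := by
  refine or_iff_not_imp_left.mpr fun hW₀ ↦ ?_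
  obtain ⟨q, hqW, hq⟩ := W.ne_bot_iff.mp hW₀
  let orbit : degreeLT K (Fintype.card n) →ₗ[K] (n → K) :=
    { toFun p := aeval A (p : K[X]) *ᵥ q
      map_add' p r := by simp [add_mulVec]
      map_smul' c p := by simp [smul_mulVec] }
  have hinj : Function.Injective orbit := by
    refine (injective_iff_map_eq_zero orbit).mpr fun ⟨p, hpdeg⟩ hp ↦ ?_
    by_contra hp₀
    refine aeval_mulVec_ne_zero hA (p := p) (fun h ↦ hp₀ (Subtype.ext h)) ?_ hq hp
    exact (natDegree_lt_iff_degree_lt (fun h ↦ hp₀ (Subtype.ext h))).mpr (mem_degreeLT.mp hpdeg)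
  have hsurj : Function.Surjective orbit :=
    (LinearMap.injective_iff_surjective_of_finrank_eq_finrank (by
      simp [(degreeLTEquiv K _).finrank_eq])).mp hinj
  refine eq_top_iff.mpr fun x _ ↦ ?_
  obtain ⟨p, rfl⟩ := hsurj x
  exact aeval_mulVec_mem hW p hqW

theorem linearIndependent_of_vecMul_eq_smul (hA : Irreducible A.charpoly) {ω : n → L}
    (hω : ω ≠ 0) {lam : L} (heig : ω ᵥ* A.map (algebraMap K L) = lam • ω) :
    LinearIndependent K ω := by
  rw [linearIndependent_iff_injective_fintypeLinearCombination, ← LinearMap.ker_eq_bot]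
  have hinv : ∀ x ∈ LinearMap.ker (Fintype.linearCombination K ω),
      A *ᵥ x ∈ LinearMap.ker (Fintype.linearCombination K ω) := by
    intro x hx
    rw [LinearMap.mem_ker] at hx ⊢
    rw [linearCombination_mulVec, heig]
    simp only [Fintype.linearCombination_apply, Pi.smul_apply, smul_eq_mul, ← mul_smul_comm,
      ← Finset.mul_sum] at hx ⊢
    rw [hx, mul_zero]
  refine (eq_bot_or_eq_top_of_mulVec_mem hA _ hinv).resolve_right fun htop ↦ hω (funext fun i ↦ ?_)
  simpa using LinearMap.congr_fun (LinearMap.ker_eq_top.mp htop) (Pi.single i 1)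

end Matrix

/-- if M is an integer matrix with characteristic polynomial
irreducible over ℚ and ω is a positive left eigenvector for a real eigenvalue λ,
then the entries of ω are ℚ-linearly independent; in particular for a ≠ b,
ω_a and ω_b are independent over ℚ. -/
theorem stmt_5 {k : ℕ} (M : Matrix (Fin k) (Fin k) ℤ)
    (hirr : Irreducible (Matrix.charpoly (M.map ((↑) : ℤ → ℚ))))
    (ω : Fin k → ℝ) (hpos : ∀ i, 0 < ω i) (lam : ℝ)
    (heig : ∀ j, (∑ i, ω i * (M i j : ℝ)) = lam * ω j) :
    (∀ q : Fin k → ℚ, (∑ i, (q i : ℝ) * ω i) = 0 → q = 0) ∧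
    (∀ a b : Fin k, a ≠ b →
      ∀ r s : ℚ, (r : ℝ) * ω a + (s : ℝ) * ω b = 0 → r = 0 ∧ s = 0) := by
  have hli : LinearIndependent ℚ ω := by
    cases isEmpty_or_nonempty (Fin k)
    · exact linearIndependent_empty_type
    refine linearIndependent_of_vecMul_eq_smul hirr
      (Function.ne_iff.mpr ⟨Classical.arbitrary _, (hpos _).ne'⟩) (lam := lam) ?_
    ext j
    simpa [vecMul, dotProduct] using heig j
  refine ⟨fun q hq ↦ funext fun i ↦ ?_, fun a b hab r s hrs ↦ ?_⟩
  · exact Fintype.linearIndependent_iff.mp hli q (by simpa [Rat.smul_def] using hq) i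
  · exact (LinearIndepOn.pair_iff ω hab).mp (hli.linearIndepOn _) r s
      (by simpa [Rat.smul_def] using hrs)
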